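/- arXiv:1405.1170 — 3 statements merged into one kernel-verified Lean document; each statement's English description precedes it below -/
import Mathlib

section
/- Let μ be a probability measure, γ > 0, and let f, g be measurable functions with f ≥ 0, f not μ-a.e. zero, f·max(log f, 0) ∈ L¹(μ), and ∫ exp(γ·g) dμ < ∞. Then ∫ f·g dμ ≤ (1/γ)·∫ f·log(f/∫f dμ) dμ + ((∫ f dμ)/γ)·log(∫ exp(γ·g) dμ), where the left-hand side is interpreted in ℝ ∪ {−∞} (the positive part of f·g is μ-integrable). -/
/-!
Young's inequality `u v ≤ u log u - u + eᵛ` (`u ≥ 0`), applied pointwise with `u = f / μ(f)` and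
`v = γ g - log μ(e^{γg})`, bounds `f g` by an integrable function `k` whose integral is the
right-hand side. Since `ofReal (f g) ≤ ofReal k` and `ofReal (-k) ≤ ofReal (-(f g))`, the
extended integral `μ((fg)₊) - μ((fg)₋)` is at most `μ(k₊) - μ(k₋) = ∫ k`, with no need to know
whether `f g` is integrable.
-/

open MeasureTheory Real
open scoped ENNReal

namespace Real

theorem mul_le_mul_log_sub_add_exp {a : ℝ} (ha : 0 ≤ a) (b : ℝ) :
    a * b ≤ a * log a - a + exp b := by
  rcases ha.eq_or_lt with rfl | ha
  · simpa using (exp_pos b).le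
  · have h := add_one_le_exp (b - log a)
    rw [exp_sub, exp_log ha, le_div_iff₀ ha] at h
    linarith

theorem mul_le_mul_log_div_sub_add_exp {a m Z : ℝ} (ha : 0 ≤ a) (hm : 0 < m) (hZ : 0 < Z)
    (c : ℝ) : a * c ≤ a * log (a / m) - a + m / Z * exp c + a * log Z := by
  have h := mul_le_mul_log_sub_add_exp (div_nonneg ha hm.le) (c - log Z)
  rw [exp_sub, exp_log hZ] at h
  calc a * c = m * (a / m * (c - log Z)) + a * log Z := by field_simp; ring
    _ ≤ m * (a / m * log (a / m) - a / m + exp c / Z) + a * log Z := by gcongr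
    _ = a * log (a / m) - a + m / Z * exp c + a * log Z := by field_simp

theorem mul_log_div (a : ℝ) {m : ℝ} (hm : m ≠ 0) : a * log (a / m) = a * log a - a * log m := by
  rcases eq_or_ne a 0 with rfl | ha
  · simp
  · rw [log_div ha hm, mul_sub]

theorem abs_mul_log_le_mul_max_log_add_one {x : ℝ} (hx : 0 ≤ x) :
    |x * log x| ≤ x * max (log x) 0 + 1 := by
  have hmax : x * log x ≤ x * max (log x) 0 := mul_le_mul_of_nonneg_left (le_max_left _ _) hx
  have hlow := self_sub_one_le_mul_log hx
  have : 0 ≤ x * max (log x) 0 := mul_nonneg hx (le_max_right _ _)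
  exact abs_le.2 ⟨by linarith, by linarith⟩

end Real

namespace MeasureTheory

variable {α : Type*} [MeasurableSpace α] {μ : Measure α} [IsFiniteMeasure μ] {f : α → ℝ}

theorem Integrable.of_mul_max_log (hfm : AEStronglyMeasurable f μ) (hf0 : ∀ x, 0 ≤ f x)
    (h : Integrable (fun x => f x * max (log (f x)) 0) μ) : Integrable f μ := by
  refine (h.add (integrable_const 1)).mono' hfm (Filter.Eventually.of_forall fun x => ?_)
  rw [norm_of_nonneg (hf0 x)]
  have := self_sub_one_le_mul_log (hf0 x)
  have := mul_le_mul_of_nonneg_left (le_max_left (log (f x)) 0) (hf0 x)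
  simp only [Pi.add_apply]
  linarith

theorem Integrable.mul_log_of_mul_max_log (hfm : Measurable f) (hf0 : ∀ x, 0 ≤ f x)
    (h : Integrable (fun x => f x * max (log (f x)) 0) μ) :
    Integrable (fun x => f x * log (f x)) μ :=
  (h.add (integrable_const 1)).mono' (by fun_prop)
    (Filter.Eventually.of_forall fun x => abs_mul_log_le_mul_max_log_add_one (hf0 x))

theorem Integrable.mul_log_div_of_mul_max_log (hfm : Measurable f) (hf0 : ∀ x, 0 ≤ f x)
    (h : Integrable (fun x => f x * max (log (f x)) 0) μ) {c : ℝ} (hc : c ≠ 0) :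
    Integrable (fun x => f x * log (f x / c)) μ := by
  simp_rw [mul_log_div _ hc]
  exact (h.mul_log_of_mul_max_log hfm hf0).sub
    ((Integrable.of_mul_max_log hfm.aestronglyMeasurable hf0 h).mul_const _)

end MeasureTheory

theorem lintegral_ofReal_sub_lintegral_ofReal_neg_le_integral {α : Type*} [MeasurableSpace α]
    {μ : Measure α} {h k : α → ℝ} (hk : Integrable k μ) (hle : h ≤ᵐ[μ] k) :
    ((∫⁻ x, ENNReal.ofReal (h x) ∂μ : ℝ≥0∞) : EReal)
        - ((∫⁻ x, ENNReal.ofReal (-h x) ∂μ : ℝ≥0∞) : EReal) ≤ ((∫ x, k x ∂μ : ℝ) : EReal) := by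
  have hk_neg : ∫⁻ x, ENNReal.ofReal (-k x) ∂μ < ∞ := hk.neg.lintegral_lt_top
  calc _ ≤ ((∫⁻ x, ENNReal.ofReal (k x) ∂μ : ℝ≥0∞) : EReal)
        - ((∫⁻ x, ENNReal.ofReal (-k x) ∂μ : ℝ≥0∞) : EReal) := by
        refine EReal.sub_le_sub (EReal.coe_ennreal_le_coe_ennreal_iff.2 ?_)
          (EReal.coe_ennreal_le_coe_ennreal_iff.2 ?_) <;>
        refine lintegral_mono_ae (hle.mono fun x hx => ENNReal.ofReal_le_ofReal ?_) <;> linarith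
    _ = ((∫ x, k x ∂μ : ℝ) : EReal) := by
        rw [integral_eq_lintegral_pos_part_sub_lintegral_neg_part hk, EReal.coe_sub,
          EReal.coe_ennreal_toReal hk.lintegral_lt_top.ne,
          EReal.coe_ennreal_toReal hk_neg.ne]

theorem stmt_1_general {M : Type*} [MeasurableSpace M] (μ : Measure M) [IsProbabilityMeasure μ]
    (γ : ℝ) (hγ : 0 < γ) (f g : M → ℝ)
    (hfm : Measurable f)
    (hf0 : ∀ x, 0 ≤ f x) (hfne : ¬ (f =ᵐ[μ] 0))
    (hflog : Integrable (fun x => f x * max (Real.log (f x)) 0) μ)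
    (hexp : Integrable (fun x => Real.exp (γ * g x)) μ) :
    (∫⁻ x, ENNReal.ofReal (f x * g x) ∂μ < ⊤) ∧
      ((∫⁻ x, ENNReal.ofReal (f x * g x) ∂μ : ℝ≥0∞) : EReal)
          - ((∫⁻ x, ENNReal.ofReal (-(f x * g x)) ∂μ : ℝ≥0∞) : EReal)
        ≤ (((1 / γ) * ∫ x, f x * Real.log (f x / ∫ y, f y ∂μ) ∂μ
            + ((∫ x, f x ∂μ) / γ) * Real.log (∫ x, Real.exp (γ * g x) ∂μ) : ℝ) : EReal) := by
  set m := ∫ y, f y ∂μ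
  set Z := ∫ x, exp (γ * g x) ∂μ
  have hf : Integrable f μ := .of_mul_max_log hfm.aestronglyMeasurable hf0 hflog
  have hm : 0 < m := (integral_nonneg hf0).lt_of_ne fun h =>
    hfne ((integral_eq_zero_iff_of_nonneg hf0 hf).1 h.symm)
  have hZ : 0 < Z := integral_exp_pos hexp
  have hent : Integrable (fun x => f x * log (f x / m)) μ :=
    hflog.mul_log_div_of_mul_max_log hfm hf0 hm.ne'
  set k := fun x => (f x * log (f x / m) - f x + m / Z * exp (γ * g x) + f x * log Z) / γ
  have hent_sub : Integrable (fun x => f x * log (f x / m) - f x) μ := hent.sub hf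
  have hexp_mul : Integrable (fun x => m / Z * exp (γ * g x)) μ := hexp.const_mul _
  have hsum : Integrable (fun x => f x * log (f x / m) - f x + m / Z * exp (γ * g x)) μ :=
    hent_sub.add hexp_mul
  have hk : Integrable k μ := (hsum.add (hf.mul_const _)).div_const _
  have hle : ∀ x, f x * g x ≤ k x := fun x => by
    have := mul_le_mul_log_div_sub_add_exp (hf0 x) hm hZ (γ * g x)
    rw [le_div_iff₀' hγ]
    linarith
  have hk_int : ∫ x, k x ∂μ = 1 / γ * ∫ x, f x * log (f x / m) ∂μ + m / γ * log Z := by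
    rw [integral_div, integral_add hsum (hf.mul_const _), integral_add hent_sub hexp_mul,
      integral_sub hent hf, integral_const_mul, integral_mul_const]
    field_simp
    ring
  refine ⟨(lintegral_mono fun x => ENNReal.ofReal_le_ofReal (hle x)).trans_lt
    hk.lintegral_lt_top, ?_⟩
  rw [← hk_int]
  exact lintegral_ofReal_sub_lintegral_ofReal_neg_le_integral hk (.of_forall hle)

/-- The entropic inequality: for a probability measure `μ`, `γ > 0`, `f ≥ 0` measurable,
not a.e. zero, with `f log₊ f ∈ L¹(μ)` and `exp(γ g) ∈ L¹(μ)`, the positive part of `f·g`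
is integrable and `μ(fg) ≤ (1/γ) Ent_μ(f) + (μ(f)/γ) log μ(e^{γg})` in `ℝ ∪ {−∞}`. -/
theorem stmt_1 {M : Type*} [MeasurableSpace M] (μ : Measure M) [IsProbabilityMeasure μ]
    (γ : ℝ) (hγ : 0 < γ) (f g : M → ℝ)
    (hfm : Measurable f) (hgm : Measurable g)
    (hf0 : ∀ x, 0 ≤ f x) (hfne : ¬ (f =ᵐ[μ] 0))
    (hflog : Integrable (fun x => f x * max (Real.log (f x)) 0) μ)
    (hexp : Integrable (fun x => Real.exp (γ * g x)) μ) :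
    (∫⁻ x, ENNReal.ofReal (f x * g x) ∂μ < ⊤) ∧
      ((∫⁻ x, ENNReal.ofReal (f x * g x) ∂μ : ℝ≥0∞) : EReal)
          - ((∫⁻ x, ENNReal.ofReal (-(f x * g x)) ∂μ : ℝ≥0∞) : EReal)
        ≤ (((1 / γ) * ∫ x, f x * Real.log (f x / ∫ y, f y ∂μ) ∂μ
            + ((∫ x, f x ∂μ) / γ) * Real.log (∫ x, Real.exp (γ * g x) ∂μ) : ℝ) : EReal) :=
  stmt_1_general μ γ hγ f g hfm hf0 hfne hflog hexp
end

section
/- Let μ be a probability measure and f ≥ 0 measurable with f not μ-a.e. zero. Then the following are equivalent: (i) f ∈ L¹(μ) and f·log(f/μ(f)) ∈ L¹(μ); (ii) f·max(log f, 0) ∈ L¹(μ). -/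
/-!
Since `t log t ≥ t - 1 ≥ -1` for `t ≥ 0`, the function `f log f` is bounded below, so on a finite
measure space it is integrable iff its positive part `f log₊ f` is. Moreover `f ≤ e + f log₊ f`,
so integrability of `f log₊ f` already forces `f ∈ L¹`, and then `f log (f / μ(f))` differs from
`f log f` by the integrable function `f log μ(f)`; here `μ(f) ≠ 0` because `f` is not a.e. zero.
-/

namespace Real

lemma mul_log_eq_mul_log_div_add (x : ℝ) {c : ℝ} (hc : c ≠ 0) :
    x * log x = x * log (x / c) + x * log c := by
  rcases eq_or_ne x 0 with rfl | hx
  · simp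
  · rw [log_div hx hc]
    ring

lemma mul_max_log_zero_eq {x : ℝ} (hx : 0 ≤ x) : x * max (log x) 0 = max (x * log x) 0 := by
  rw [mul_max_of_nonneg _ _ hx, mul_zero]

lemma le_exp_one_add_mul_max_log_zero {x : ℝ} (hx : 0 ≤ x) : x ≤ exp 1 + x * max (log x) 0 := by
  rcases le_or_gt x (exp 1) with he | he
  · nlinarith [le_max_right (log x) 0]
  · have hlog : 1 ≤ log x := (le_log_iff_exp_le (by linarith [exp_pos 1])).2 he.le
    rw [max_eq_left (by linarith)]
    nlinarith [exp_pos 1]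

end Real

open MeasureTheory Real

namespace MeasureTheory

variable {α : Type*} [MeasurableSpace α] {μ : Measure α}

lemma integrable_iff_integrable_max_zero_of_le [IsFiniteMeasure μ] {g : α → ℝ}
    (hg : AEStronglyMeasurable g μ) {c : ℝ} (hc : ∀ᵐ x ∂μ, c ≤ g x) :
    Integrable g μ ↔ Integrable (fun x ↦ max (g x) 0) μ := by
  refine ⟨Integrable.pos_part, fun h ↦ (h.add (integrable_const |c|)).mono' hg ?_⟩
  filter_upwards [hc] with x hx
  rw [Pi.add_apply, norm_eq_abs, abs_le]
  constructor <;> linarith [le_max_left (g x) 0, le_max_right (g x) 0, neg_abs_le c, le_abs_self c]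

lemma integrable_mul_max_log_zero_iff [IsFiniteMeasure μ] {f : α → ℝ}
    (hf : AEStronglyMeasurable f μ) (hf0 : ∀ x, 0 ≤ f x) :
    Integrable (fun x ↦ f x * max (log (f x)) 0) μ ↔ Integrable (fun x ↦ f x * log (f x)) μ := by
  simp_rw [mul_max_log_zero_eq (hf0 _)]
  refine (integrable_iff_integrable_max_zero_of_le
    (continuous_mul_log.comp_aestronglyMeasurable hf) (c := -1) (ae_of_all _ fun x ↦ ?_)).symm
  linarith [self_sub_one_le_mul_log (hf0 x), hf0 x]

lemma Integrable.of_mul_max_log_zero [IsFiniteMeasure μ] {f : α → ℝ}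
    (hf : AEStronglyMeasurable f μ) (hf0 : ∀ x, 0 ≤ f x)
    (h : Integrable (fun x ↦ f x * max (log (f x)) 0) μ) : Integrable f μ :=
  ((integrable_const (exp 1)).add h).mono' hf <| ae_of_all _ fun x ↦ by
    simpa [abs_of_nonneg (hf0 x)] using le_exp_one_add_mul_max_log_zero (hf0 x)

lemma integrable_mul_log_div_iff {f : α → ℝ} (hf : Integrable f μ) {c : ℝ} (hc : c ≠ 0) :
    Integrable (fun x ↦ f x * log (f x / c)) μ ↔ Integrable (fun x ↦ f x * log (f x)) μ := by
  simp_rw [mul_log_eq_mul_log_div_add (f _) hc]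
  exact (integrable_add_iff_integrable_left' (hf.mul_const _)).symm

end MeasureTheory

/-- For a probability measure `μ` and `f ≥ 0` measurable, not a.e. zero:
`f ∈ L¹(μ)` and `f log(f/μ(f)) ∈ L¹(μ)` iff `f log₊ f ∈ L¹(μ)`. -/
theorem stmt_2 {M : Type*} [MeasurableSpace M] (μ : Measure M) [IsProbabilityMeasure μ]
    (f : M → ℝ) (hfm : Measurable f) (hf0 : ∀ x, 0 ≤ f x) (hfne : ¬ (f =ᵐ[μ] 0)) :
    (Integrable f μ ∧
        Integrable (fun x => f x * Real.log (f x / ∫ y, f y ∂μ)) μ) ↔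
      Integrable (fun x => f x * max (Real.log (f x)) 0) μ := by
  have hmean : Integrable f μ → ∫ y, f y ∂μ ≠ 0 := fun hfi h ↦
    hfne ((integral_eq_zero_iff_of_nonneg hf0 hfi).1 h)
  have hlog_iff := integrable_mul_max_log_zero_iff (μ := μ) hfm.aestronglyMeasurable hf0
  constructor
  · rintro ⟨hfi, hlog⟩
    exact hlog_iff.2 ((integrable_mul_log_div_iff hfi (hmean hfi)).1 hlog)
  · intro hlog
    have hfi := hlog.of_mul_max_log_zero hfm.aestronglyMeasurable hf0
    exact ⟨hfi, (integrable_mul_log_div_iff hfi (hmean hfi)).2 (hlog_iff.1 hlog)⟩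
end

section
/- Let μ be a probability measure, let p₁,…,p_q ≥ r > 0 satisfy 1/p₁ + … + 1/p_q = 1/r, and let α > 0 with α·r ≥ 1. Suppose u₁,…,u_q are measurable functions such that for each i, ∫ exp((γᵢ·|uᵢ|)^{α·pᵢ}) dμ ≤ 2 for some γᵢ > 0. Then ∫ exp((γ₁⋯γ_q·|u₁⋯u_q|)^{α·r}) dμ ≤ 2. -/
open MeasureTheory
open scoped ENNReal

/-
Writing `wᵢ = r / pᵢ`, the weights `wᵢ` are nonnegative and sum to `1`, and
`(γ₁⋯γ_q |u₁⋯u_q|)^{αr} = ∏ᵢ ((γᵢ|uᵢ|)^{αpᵢ})^{wᵢ}`. The weighted AM-GM inequality bounds this by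
`∑ᵢ wᵢ (γᵢ|uᵢ|)^{αpᵢ}`, so `exp` of it is at most `∏ᵢ exp((γᵢ|uᵢ|)^{αpᵢ})^{wᵢ}`, and Hölder's
inequality with exponents `1/wᵢ = pᵢ/r` bounds the integral of that product by `∏ᵢ 2^{wᵢ} = 2`.
-/

namespace ENNReal

theorem rpow_sum {ι : Type*} {c : ℝ≥0∞} (hc₀ : c ≠ 0) (hc : c ≠ ∞) (f : ι → ℝ) (s : Finset ι) :
    c ^ ∑ i ∈ s, f i = ∏ i ∈ s, c ^ f i :=
  map_sum (⟨⟨fun x : ℝ => c ^ x, rpow_zero⟩, fun y z => rpow_add y z hc₀ hc⟩ :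
    ℝ →+ Additive ℝ≥0∞) f s

theorem ofReal_exp_prod_rpow_le {ι : Type*} {s : Finset ι} {w b : ι → ℝ}
    (hw₀ : ∀ i ∈ s, 0 ≤ w i) (hw : ∑ i ∈ s, w i = 1) (hb : ∀ i ∈ s, 0 ≤ b i) :
    ENNReal.ofReal (Real.exp (∏ i ∈ s, b i ^ w i))
      ≤ ∏ i ∈ s, ENNReal.ofReal (Real.exp (b i)) ^ w i := calc
  _ ≤ ENNReal.ofReal (Real.exp (∑ i ∈ s, w i * b i)) :=
    ofReal_le_ofReal <| Real.exp_le_exp.2 <|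
      Real.geom_mean_le_arith_mean_weighted s w b hw₀ hw hb
  _ = ∏ i ∈ s, ENNReal.ofReal (Real.exp (b i)) ^ w i := by
    rw [Real.exp_sum, ofReal_prod_of_nonneg fun i _ => (Real.exp_pos _).le]
    refine Finset.prod_congr rfl fun i _ => ?_
    rw [ofReal_rpow_of_pos (Real.exp_pos _), ← Real.exp_mul, mul_comm]

end ENNReal

theorem Real.prod_rpow_mul_eq_prod_rpow_rpow_div {ι : Type*} {s : Finset ι} {a p : ι → ℝ}
    (ha : ∀ i ∈ s, 0 ≤ a i) (hp : ∀ i ∈ s, p i ≠ 0) (c r : ℝ) :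
    (∏ i ∈ s, a i) ^ (c * r) = ∏ i ∈ s, (a i ^ (c * p i)) ^ (r / p i) := by
  rw [← Real.finsetProd_rpow s a ha]
  refine Finset.prod_congr rfl fun i hi => ?_
  rw [← Real.rpow_mul (ha i hi)]
  congr 1
  field_simp [hp i hi]

theorem MeasureTheory.lintegral_prod_rpow_le_of_lintegral_le {α ι : Type*} [MeasurableSpace α]
    {μ : Measure α} {s : Finset ι} {f : ι → α → ℝ≥0∞} (hf : ∀ i ∈ s, AEMeasurable (f i) μ)
    {w : ι → ℝ} (hw₀ : ∀ i ∈ s, 0 ≤ w i) (hw : ∑ i ∈ s, w i = 1) {C : ℝ≥0∞} (hC₀ : C ≠ 0)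
    (hC : ∀ i ∈ s, ∫⁻ a, f i a ∂μ ≤ C) :
    ∫⁻ a, ∏ i ∈ s, f i a ^ w i ∂μ ≤ C := by
  rcases eq_or_ne C ∞ with rfl | hC_top
  · exact le_top
  calc ∫⁻ a, ∏ i ∈ s, f i a ^ w i ∂μ
      ≤ ∏ i ∈ s, (∫⁻ a, f i a ∂μ) ^ w i := ENNReal.lintegral_prod_norm_pow_le s hf hw hw₀
    _ ≤ ∏ i ∈ s, C ^ w i :=
      Finset.prod_le_prod' fun i hi => ENNReal.rpow_le_rpow (hC i hi) (hw₀ i hi)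
    _ = C := by rw [← ENNReal.rpow_sum hC₀ hC_top, hw, ENNReal.rpow_one]

theorem stmt_3_general {M : Type*} [MeasurableSpace M] (μ : Measure M)
    (q : ℕ) (p : Fin q → ℝ) (r : ℝ) (hr : 0 < r)
    (hp : ∀ i, r ≤ p i) (hsum : ∑ i, 1 / p i = 1 / r)
    (α : ℝ)
    (u : Fin q → M → ℝ) (hu : ∀ i, Measurable (u i))
    (γ : Fin q → ℝ) (hγ : ∀ i, 0 < γ i)
    (hbound : ∀ i, ∫⁻ x, ENNReal.ofReal (Real.exp ((γ i * |u i x|) ^ (α * p i))) ∂μ ≤ 2) :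
    ∫⁻ x, ENNReal.ofReal (Real.exp (((∏ i, γ i) * |∏ i, u i x|) ^ (α * r))) ∂μ ≤ 2 := by
  have hp₀ : ∀ i, 0 < p i := fun i => hr.trans_le (hp i)
  have hw₀ : ∀ i ∈ Finset.univ, 0 ≤ r / p i := fun i _ => div_nonneg hr.le (hp₀ i).le
  have hw : ∑ i, r / p i = 1 := by
    simp_rw [div_eq_mul_one_div r, ← Finset.mul_sum, hsum]
    field_simp
  have hγu : ∀ x i, 0 ≤ γ i * |u i x| := fun x i => mul_nonneg (hγ i).le (abs_nonneg _)
  have hsplit : ∀ x, ((∏ i, γ i) * |∏ i, u i x|) ^ (α * r)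
      = ∏ i, ((γ i * |u i x|) ^ (α * p i)) ^ (r / p i) := fun x => by
    rw [Finset.abs_prod, ← Finset.prod_mul_distrib]
    exact Real.prod_rpow_mul_eq_prod_rpow_rpow_div (fun i _ => hγu x i)
      (fun i _ => (hp₀ i).ne') α r
  simp_rw [hsplit]
  calc _ ≤ ∫⁻ x, ∏ i, ENNReal.ofReal (Real.exp ((γ i * |u i x|) ^ (α * p i))) ^ (r / p i) ∂μ :=
        lintegral_mono fun x => ENNReal.ofReal_exp_prod_rpow_le hw₀ hw
          fun i _ => Real.rpow_nonneg (hγu x i) _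
    _ ≤ 2 := lintegral_prod_rpow_le_of_lintegral_le
        (fun i _ => ((((hu i).abs.const_mul (γ i)).pow_const _).exp.ennreal_ofReal).aemeasurable)
        hw₀ hw two_ne_zero fun i _ => hbound i

/-- Lemma on products in exponential Orlicz spaces: if `∫ exp((γᵢ|uᵢ|)^{αpᵢ}) dμ ≤ 2`
for each `i`, with `pᵢ ≥ r > 0`, `∑ 1/pᵢ = 1/r`, `α > 0`, `αr ≥ 1`, then
`∫ exp((γ₁⋯γ_q |u₁⋯u_q|)^{αr}) dμ ≤ 2`. -/
theorem stmt_3 {M : Type*} [MeasurableSpace M] (μ : Measure M) [IsProbabilityMeasure μ]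
    (q : ℕ) (hq : 0 < q) (p : Fin q → ℝ) (r : ℝ) (hr : 0 < r)
    (hp : ∀ i, r ≤ p i) (hsum : ∑ i, 1 / p i = 1 / r)
    (α : ℝ) (hα : 0 < α) (hαr : 1 ≤ α * r)
    (u : Fin q → M → ℝ) (hu : ∀ i, Measurable (u i))
    (γ : Fin q → ℝ) (hγ : ∀ i, 0 < γ i)
    (hbound : ∀ i, ∫⁻ x, ENNReal.ofReal (Real.exp ((γ i * |u i x|) ^ (α * p i))) ∂μ ≤ 2) :
    ∫⁻ x, ENNReal.ofReal (Real.exp (((∏ i, γ i) * |∏ i, u i x|) ^ (α * r))) ∂μ ≤ 2 :=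
  stmt_3_general μ q p r hr hp hsum α u hu γ hγ hbound
end
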